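/- The Wang tile sets U (19 tiles) and W (19 tiles) are equivalent: there exist bijections h on horizontal colors and k on vertical colors such that W = {(k(a), h(b), k(c), h(d)) : (a,b,c,d) ∈ U}. Consequently the map γ : u_i ↦ w_i induces a shift-commuting bijection γ : Ω_U → Ω_W between their Wang shifts. -/
import Mathlib


/-- Vertical colors of the tile set `U`. -/
inductive UV : Type
  | A | B | C | D | E | F | G | H | I | J
deriving DecidableEq

/-- Horizontal colors of the tile set `U`. -/
inductive UH : Type
  | K | L | M | N | O | P
deriving DecidableEq

/-- Vertical colors of the tile set `W`. -/
inductive WV : Type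
  | A | B | G | I | AF | BF | GF | ID | IH | IJ
deriving DecidableEq

/-- Horizontal colors of the tile set `W`. -/
inductive WH : Type
  | K | M | KO | MO | PL | PO
deriving DecidableEq

open UV UH in
/-- The 19 tiles of `U`, as tuples `(right, top, left, bottom)`. -/
def Utile : Fin 19 → UV × UH × UV × UH :=
  ![(F,O,J,O), (F,O,H,L), (J,M,F,P), (D,M,F,K), (H,P,J,P), (H,P,H,N),
    (H,K,F,P), (H,K,D,P), (B,O,I,O), (G,L,E,O), (G,L,C,L), (A,L,I,O),
    (E,P,G,P), (E,P,I,P), (I,P,G,K), (I,P,I,K), (I,K,B,M), (I,K,A,K),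
    (C,N,I,P)]

open WV WH in
/-- The 19 tiles of `W`, as tuples `(right, top, left, bottom)`. -/
def Wtile : Fin 19 → WV × WH × WV × WH :=
  ![(I,K,A,K), (I,K,B,M), (A,PL,I,KO), (G,PL,I,PO), (B,KO,A,KO),
    (B,KO,B,MO), (B,PO,I,KO), (B,PO,G,KO), (IH,K,GF,K), (ID,M,AF,K),
    (ID,M,BF,M), (IJ,M,GF,K), (AF,KO,ID,KO), (AF,KO,GF,KO), (GF,KO,ID,PO),
    (GF,KO,GF,PO), (GF,PO,IH,PL), (GF,PO,IJ,PO), (BF,MO,GF,KO)]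

/-- A valid Wang tiling of the plane by the tile set `U` (tiles indexed by
`Fin 19`). -/
def ValidU (x : ℤ × ℤ → Fin 19) : Prop :=
  ∀ p : ℤ × ℤ, (Utile (x p)).1 = (Utile (x (p.1 + 1, p.2))).2.2.1 ∧
    (Utile (x p)).2.1 = (Utile (x (p.1, p.2 + 1))).2.2.2

/-- A valid Wang tiling of the plane by the tile set `W` (tiles indexed by
`Fin 19`). -/
def ValidW (x : ℤ × ℤ → Fin 19) : Prop :=
  ∀ p : ℤ × ℤ, (Wtile (x p)).1 = (Wtile (x (p.1 + 1, p.2))).2.2.1 ∧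
    (Wtile (x p)).2.1 = (Wtile (x (p.1, p.2 + 1))).2.2.2


def kV : UV → WV
  | .J => .A | .E => .AF | .H => .B | .C => .BF | .D => .G
  | .I => .GF | .F => .I | .G => .ID | .B => .IH | .A => .IJ

def kVinv : WV → UV
  | .A => .J | .AF => .E | .B => .H | .BF => .C | .G => .D
  | .GF => .I | .I => .F | .ID => .G | .IH => .B | .IJ => .A

def hH : UH → WH
  | .O => .K | .P => .KO | .L => .M | .N => .MO | .M => .PL | .K => .PO

def hHinv : WH → UH
  | .K => .O | .KO => .P | .M => .L | .MO => .N | .PL => .M | .PO => .K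

def kEquiv : UV ≃ WV := ⟨kV, kVinv, by intro x; cases x <;> rfl, by intro x; cases x <;> rfl⟩
def hEquiv : UH ≃ WH := ⟨hH, hHinv, by intro x; cases x <;> rfl, by intro x; cases x <;> rfl⟩

lemma Wtile_eq : ∀ i : Fin 19, Wtile i =
    (kV (Utile i).1, hH (Utile i).2.1, kV (Utile i).2.2.1, hH (Utile i).2.2.2) := by
  decide

/-- The Wang tile sets `U` and `W` are equivalent: there are bijections `k` of
vertical colors and `h` of horizontal colors carrying the tile set `U` onto
the tile set `W`.  Consequently the map `γ : u_i ↦ w_i` (the identity on the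
indices `Fin 19`) is a bijection between the Wang shifts `Ω_U` and `Ω_W`. -/
theorem U_equiv_W :
    (∃ (k : UV ≃ WV) (h : UH ≃ WH),
      Set.range Wtile = (fun t : UV × UH × UV × UH =>
        (k t.1, h t.2.1, k t.2.2.1, h t.2.2.2)) '' Set.range Utile) ∧
    {x : ℤ × ℤ → Fin 19 | ValidU x} = {x | ValidW x} := by
  constructor
  · refine ⟨kEquiv, hEquiv, ?_⟩
    have : Wtile = (fun t : UV × UH × UV × UH =>
        (kEquiv t.1, hEquiv t.2.1, kEquiv t.2.2.1, hEquiv t.2.2.2)) ∘ Utile := by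
      funext i; exact Wtile_eq i
    rw [this, Set.range_comp]
  · ext x
    have hk : Function.Injective kV := kEquiv.injective
    have hh : Function.Injective hH := hEquiv.injective
    simp only [Set.mem_setOf_eq]
    constructor
    · intro hx p
      obtain ⟨h1, h2⟩ := hx p
      simp only [Wtile_eq]
      exact ⟨congrArg kV h1, congrArg hH h2⟩
    · intro hx p
      obtain ⟨h1, h2⟩ := hx p
      simp only [Wtile_eq] at h1 h2
      exact ⟨hk h1, hh h2⟩
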